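/- arXiv:1011.3783 — 2 statements merged into one kernel-verified Lean document; each statement's English description precedes it below -/
import Mathlib

section
/- Let f : ℝ^{n×n} → [0,∞) be rank-one convex and satisfy f(F) ≤ C(1+|F|^p) for some p ∈ [1,∞) and C > 0. Then there is a constant C' > 0 such that |f(F) - f(G)| ≤ C'(1 + |F|^{p-1} + |G|^{p-1})|F - G| for all F, G with F - G of rank at most one. -/
/-!
Restricted to the line through `G` and `F` (a rank-one direction), `f` is convex and nonnegative,
so `f F - f G` is at most the slope of `f` beyond `F`, which in turn is at most `f(H) / s` for the
point `H = F + s (F - G)`. Taking `s |F - G| = T := 1 + |F| + |G|` puts `H` in the ball of radius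
`2T`, where the growth bound gives `f(H) ≤ C (1 + 2^p) T^p`; hence
`f F - f G ≤ C (1 + 2^p) T^(p-1) |F - G|`, and `T^(p-1) ≤ 3^(p-1) (1 + |F|^(p-1) + |G|^(p-1))`.
-/

/-- Frobenius norm of a real square matrix. -/
noncomputable def frob {n : ℕ} (M : Matrix (Fin n) (Fin n) ℝ) : ℝ :=
  Real.sqrt (∑ i, ∑ j, (M i j) ^ 2)

open Set

theorem Matrix.exists_eq_vecMulVec_of_rank_le_one {m n K : Type*} [Fintype n] [DecidableEq n]
    [Field K] {M : Matrix m n K} (h : M.rank ≤ 1) :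
    ∃ a b, M = vecMulVec a b := by
  rw [rank] at h
  obtain ⟨⟨v, _⟩, hv⟩ := finrank_le_one_iff.mp h
  have hcol (j : n) : ∃ c : K, M.col j = c • v := by
    obtain ⟨c, hc⟩ := hv ⟨M.mulVec (Pi.single j 1), Pi.single j 1, rfl⟩
    exact ⟨c, by simpa using (congrArg Subtype.val hc).symm⟩
  choose b hb using hcol
  refine ⟨v, b, ?_⟩
  ext i j
  simpa [vecMulVec_apply, mul_comm] using congrFun (hb j) i

theorem ConvexOn.sub_le_div_of_nonneg {g : ℝ → ℝ} (hg : ConvexOn ℝ univ g) (hg1 : 0 ≤ g 1)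
    {s : ℝ} (hs : 0 < s) : g 1 - g 0 ≤ g (1 + s) / s := by
  have h := hg.slope_mono_adjacent (mem_univ 0) (mem_univ (1 + s)) zero_lt_one (by linarith)
  rw [sub_zero, div_one, add_sub_cancel_left] at h
  exact h.trans (div_le_div_of_nonneg_right (by linarith) hs.le)

theorem Real.one_add_add_rpow_le {a b q : ℝ} (ha : 0 ≤ a) (hb : 0 ≤ b) (hq : 0 ≤ q) :
    (1 + a + b) ^ q ≤ 3 ^ q * (1 + a ^ q + b ^ q) := by
  have haq := Real.rpow_nonneg ha q
  have hbq := Real.rpow_nonneg hb q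
  calc (1 + a + b) ^ q ≤ (3 * max 1 (max a b)) ^ q := by
        gcongr
        linarith [le_max_left 1 (max a b), le_max_left a b, le_max_right a b,
          le_max_right 1 (max a b)]
    _ = 3 ^ q * max 1 (max (a ^ q) (b ^ q)) := by
        rw [Real.mul_rpow (by norm_num) (by positivity), Real.rpow_max zero_le_one
          (by positivity) hq, Real.rpow_max ha hb hq, Real.one_rpow]
    _ ≤ 3 ^ q * (1 + a ^ q + b ^ q) := by
        gcongr
        exact max_le (by linarith) (max_le (by linarith) (by linarith))

section

variable {E : Type*} [NormedAddCommGroup E] [NormedSpace ℝ E] {f : E → ℝ} {p C : ℝ}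

theorem sub_le_mul_norm_sub_of_convexOn_line (hp : 0 ≤ p) (hC : 0 ≤ C) {F G : E}
    (hconv : ConvexOn ℝ univ fun t : ℝ => f (G + t • (F - G))) (hF : 0 ≤ f F)
    (hgrowth : ∀ x, f x ≤ C * (1 + ‖x‖ ^ p)) :
    f F - f G ≤ C * (1 + 2 ^ p) * (1 + ‖F‖ + ‖G‖) ^ (p - 1) * ‖F - G‖ := by
  rcases eq_or_ne F G with rfl | hFG
  · simp
  have hT : 1 ≤ 1 + ‖F‖ + ‖G‖ := by linarith [norm_nonneg F, norm_nonneg G]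
  have hFT : ‖F‖ ≤ 1 + ‖F‖ + ‖G‖ := by linarith [norm_nonneg G]
  set T := 1 + ‖F‖ + ‖G‖
  set R := ‖F - G‖
  have hR : 0 < R := norm_pos_iff.mpr (sub_ne_zero.mpr hFG)
  set s := T / R
  have hs : 0 < s := by positivity
  have hbeyond : G + (1 + s) • (F - G) = F + s • (F - G) := by
    rw [add_smul, one_smul]
    abel
  have hslope : f F - f G ≤ f (F + s • (F - G)) / s := by
    simpa only [zero_smul, add_zero, one_smul, add_sub_cancel, hbeyond] using
      hconv.sub_le_div_of_nonneg (by simpa only [one_smul, add_sub_cancel]) hs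
  have hnorm : ‖F + s • (F - G)‖ ≤ 2 * T := by
    calc ‖F + s • (F - G)‖ ≤ ‖F‖ + s * R := by
          simpa [norm_smul, abs_of_pos hs] using norm_add_le F (s • (F - G))
      _ ≤ 2 * T := by rw [div_mul_cancel₀ T hR.ne']; linarith
  have hfar : f (F + s • (F - G)) ≤ C * (1 + 2 ^ p) * T ^ p := by
    have h1 : 1 ≤ T ^ p := Real.one_le_rpow hT hp
    calc f (F + s • (F - G)) ≤ C * (1 + (2 * T) ^ p) := by
          grw [hgrowth, hnorm]
      _ ≤ C * (1 + 2 ^ p) * T ^ p := by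
          rw [Real.mul_rpow zero_le_two (by positivity)]
          nlinarith [Real.rpow_pos_of_pos two_pos p]
  calc f F - f G ≤ f (F + s • (F - G)) / s := hslope
    _ ≤ C * (1 + 2 ^ p) * T ^ p / s := by gcongr
    _ = C * (1 + 2 ^ p) * T ^ (p - 1) * R := by
        rw [Real.rpow_sub_one (by positivity)]
        simp only [s]
        field_simp

end

attribute [local instance] Matrix.frobeniusNormedAddCommGroup Matrix.frobeniusNormedSpace

theorem frob_eq_norm {n : ℕ} (M : Matrix (Fin n) (Fin n) ℝ) : frob M = ‖M‖ := by
  rw [Matrix.frobenius_norm_def, frob, Real.sqrt_eq_rpow]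
  simp [Real.norm_eq_abs, sq_abs]

/-- A rank-one convex function with `p`-growth satisfies a local
`p`-Lipschitz estimate along rank-one directions. -/
theorem stmt_1 {n : ℕ} (f : Matrix (Fin n) (Fin n) ℝ → ℝ) (p C : ℝ)
    (hp : 1 ≤ p) (hC : 0 < C)
    (hconv : ∀ (A : Matrix (Fin n) (Fin n) ℝ) (a b : Fin n → ℝ),
      ConvexOn ℝ Set.univ (fun t : ℝ => f (A + t • Matrix.vecMulVec a b)))
    (hnn : ∀ F, 0 ≤ f F)
    (hgrowth : ∀ F, f F ≤ C * (1 + frob F ^ p)) :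
    ∃ C' > 0, ∀ F G : Matrix (Fin n) (Fin n) ℝ, (F - G).rank ≤ 1 →
      |f F - f G| ≤ C' * (1 + frob F ^ (p - 1) + frob G ^ (p - 1)) * frob (F - G) := by
  simp only [frob_eq_norm] at hgrowth ⊢
  refine ⟨C * (1 + 2 ^ p) * 3 ^ (p - 1), by positivity, fun F G hrank => ?_⟩
  obtain ⟨a, b, hab⟩ := Matrix.exists_eq_vecMulVec_of_rank_le_one hrank
  have hba : G - F = Matrix.vecMulVec (-a) b := by rw [← neg_sub, hab, Matrix.neg_vecMulVec]
  have hline : |f F - f G| ≤ C * (1 + 2 ^ p) * (1 + ‖F‖ + ‖G‖) ^ (p - 1) * ‖F - G‖ := by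
    rw [abs_sub_le_iff]
    constructor
    · exact sub_le_mul_norm_sub_of_convexOn_line (by linarith) hC.le (hab ▸ hconv G a b) (hnn F)
        hgrowth
    · have := sub_le_mul_norm_sub_of_convexOn_line (by linarith) hC.le (hba ▸ hconv F (-a) b)
        (hnn G) hgrowth
      rwa [add_right_comm, norm_sub_rev] at this
  have hpow := Real.one_add_add_rpow_le (norm_nonneg F) (norm_nonneg G) (by linarith : 0 ≤ p - 1)
  calc |f F - f G| ≤ C * (1 + 2 ^ p) * (1 + ‖F‖ + ‖G‖) ^ (p - 1) * ‖F - G‖ := hline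
    _ ≤ C * (1 + 2 ^ p) * (3 ^ (p - 1) * (1 + ‖F‖ ^ (p - 1) + ‖G‖ ^ (p - 1))) * ‖F - G‖ := by
        gcongr
    _ = _ := by ring
end

section
/- Suppose a measurable function W : Ω × ℝ^{n×n} → [0,∞) admits a uniform quadratic expansion at the identity with quadratic term Q, i.e. for every η > 0 there is δ > 0 such that |W(x, Id + G) - Q(x,G)| ≤ η|G|² whenever |G| ≤ δ, for a.e. x. If g_h ∈ W^{1,∞}(Ω;ℝ^n) satisfy the uniform bound ‖∇g_h‖_∞ ≤ h^{-1/2} and ∇g_h → ∇g strongly in L²(Ω;ℝ^{n×n}), then (1/h²)∫_Ω W(x, Id + h∇g_h(x)) dx → ∫_Ω Q(x, ∇g(x)) dx as h → 0, where Q(x,·) is a quadratic form with 0 ≤ Q(x,G) ≤ c|G|² uniformly in x. -/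
/-! Once `√h ≤ δ`, the bound `‖∇g_h‖ ≤ h^{-1/2}` puts `h∇g_h` in the range of the expansion of
`W`, so `W(x, Id + h∇g_h)/h²` is `Q(x, ∇g_h)` up to `η|∇g_h|²`. A positive semidefinite form
satisfies `|Q A - Q B| ≤ (1 + 1/η) Q (A - B) + η Q B`, so the integrand differs from `Q(x, ∇g)` by
at most `C_η |∇g_h - ∇g|² + (2 + c) η |∇g|²`. After integration the first term vanishes as
`h → 0` by the `L²` convergence, and the second is arbitrarily small. -/

open MeasureTheory Filter Topology

open Matrix in
theorem QuadraticForm.continuous_of_finiteDimensional {E : Type*} [AddCommGroup E] [Module ℝ E]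
    [TopologicalSpace E] [IsTopologicalAddGroup E] [ContinuousSMul ℝ E] [T2Space E]
    [FiniteDimensional ℝ E] (Q : QuadraticForm ℝ E) : Continuous Q := by
  let b := Module.finBasis ℝ E
  let M := LinearMap.toMatrix₂ b b (QuadraticMap.associated Q)
  have hQ : ∀ x, b.equivFun x ⬝ᵥ M *ᵥ b.equivFun x = Q x := fun x => by
    rw [← QuadraticMap.associated_eq_self_apply ℝ Q x, apply_eq_dotProduct_toMatrix₂_mulVec b b]
    rfl
  have he : Continuous b.equivFun := b.equivFun.toContinuousLinearEquiv.continuous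
  exact (he.dotProduct (continuous_const.matrix_mulVec he)).congr hQ

namespace QuadraticMap

variable {E : Type*} [AddCommGroup E] [Module ℝ E] {Q : QuadraticForm ℝ E}

theorem abs_polar_le_of_nonneg (hQ : ∀ v, 0 ≤ Q v) {t : ℝ} (ht : 0 < t) (a b : E) :
    |polar Q a b| ≤ t * Q a + t⁻¹ * Q b := by
  have expand : ∀ s : ℝ, Q (s • a + b) = s ^ 2 * Q a + s * polar Q a b + Q b := fun s => by
    rw [QuadraticMap.map_add Q, QuadraticMap.map_smul, polar_smul_left, smul_eq_mul, smul_eq_mul]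
    ring
  have hplus := expand t ▸ hQ (t • a + b)
  have hminus := expand (-t) ▸ hQ ((-t) • a + b)
  have hscale : t * (t * Q a + t⁻¹ * Q b) = t ^ 2 * Q a + Q b := by field_simp
  rw [abs_le]
  constructor <;> refine le_of_mul_le_mul_left ?_ ht <;> nlinarith

theorem abs_sub_le_of_nonneg (hQ : ∀ v, 0 ≤ Q v) {t : ℝ} (ht : 0 < t) (a b : E) :
    |Q a - Q b| ≤ (1 + t⁻¹) * Q (a - b) + t * Q b := by
  have hsplit : Q a - Q b = Q (a - b) + polar Q b (a - b) := by
    rw [← sub_add_cancel a b, QuadraticMap.map_add Q (a - b) b, polar_comm, sub_add_cancel]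
    ring
  calc |Q a - Q b| ≤ |Q (a - b)| + |polar Q b (a - b)| := hsplit ▸ abs_add_le _ _
    _ ≤ Q (a - b) + (t * Q b + t⁻¹ * Q (a - b)) :=
        add_le_add (abs_of_nonneg (hQ _)).le (abs_polar_le_of_nonneg hQ ht b (a - b))
    _ = (1 + t⁻¹) * Q (a - b) + t * Q b := by ring

end QuadraticMap

section Frobenius

variable {n : ℕ}

theorem frob_sq (M : Matrix (Fin n) (Fin n) ℝ) : frob M ^ 2 = ∑ i, ∑ j, M i j ^ 2 :=
  Real.sq_sqrt (by positivity)

theorem frob_smul (a : ℝ) (M : Matrix (Fin n) (Fin n) ℝ) : frob (a • M) = |a| * frob M := by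
  simp only [frob, Matrix.smul_apply, smul_eq_mul, mul_pow, ← Finset.mul_sum]
  rw [Real.sqrt_mul (sq_nonneg a), Real.sqrt_sq_eq_abs]

theorem sq_frob_add_le (A B : Matrix (Fin n) (Fin n) ℝ) :
    frob (A + B) ^ 2 ≤ 2 * frob A ^ 2 + 2 * frob B ^ 2 := by
  simp only [frob_sq, Finset.mul_sum, ← Finset.sum_add_distrib, Matrix.add_apply]
  gcongr with i _ j _
  nlinarith [sq_nonneg (A i j - B i j)]

theorem sq_frob_sub_le (A B : Matrix (Fin n) (Fin n) ℝ) :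
    frob (A - B) ^ 2 ≤ 2 * frob A ^ 2 + 2 * frob B ^ 2 := by
  have h := sq_frob_add_le A ((-1 : ℝ) • B)
  rwa [frob_smul, abs_neg, abs_one, one_mul, neg_one_smul, ← sub_eq_add_neg] at h

theorem continuous_frob : Continuous (frob (n := n)) := by
  unfold frob; fun_prop

theorem frob_smul_le_sqrt {h : ℝ} (hh : 0 < h) {A : Matrix (Fin n) (Fin n) ℝ}
    (hA : frob A ≤ h ^ (-(1 / 2 : ℝ))) : frob (h • A) ≤ √h := by
  rw [Real.rpow_neg hh.le, ← Real.sqrt_eq_rpow] at hA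
  calc frob (h • A) = h * frob A := by rw [frob_smul, abs_of_pos hh]
    _ ≤ h * (√h)⁻¹ := mul_le_mul_of_nonneg_left hA hh.le
    _ = √h := Real.div_sqrt

end Frobenius

theorem abs_div_sq_sub_le {n : ℕ} {Q : QuadraticForm ℝ (Matrix (Fin n) (Fin n) ℝ)} {c η h w : ℝ}
    (hQ : ∀ M, 0 ≤ Q M ∧ Q M ≤ c * frob M ^ 2) (hη : 0 < η) (hh : h ≠ 0)
    {A B : Matrix (Fin n) (Fin n) ℝ} (hw : |w - Q (h • A)| ≤ η * frob (h • A) ^ 2) :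
    |w / h ^ 2 - Q B| ≤ (2 * η + c + c / η) * frob (A - B) ^ 2 + (2 + c) * η * frob B ^ 2 := by
  have hh2 : 0 < h ^ 2 := by positivity
  have hA : |w / h ^ 2 - Q A| ≤ η * frob A ^ 2 := by
    rw [QuadraticMap.map_smul, frob_smul, smul_eq_mul, mul_pow, sq_abs] at hw
    have e : w / h ^ 2 - Q A = (w - h * h * Q A) / h ^ 2 := by field_simp
    rw [e, abs_div, abs_of_pos hh2, div_le_iff₀ hh2]
    linarith
  have hAB := QuadraticMap.abs_sub_le_of_nonneg (fun M => (hQ M).1) hη A B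
  have hsplit : frob A ^ 2 ≤ 2 * frob (A - B) ^ 2 + 2 * frob B ^ 2 := by
    simpa using sq_frob_add_le (A - B) B
  calc |w / h ^ 2 - Q B| ≤ |w / h ^ 2 - Q A| + |Q A - Q B| := abs_sub_le _ _ _
    _ ≤ η * (2 * frob (A - B) ^ 2 + 2 * frob B ^ 2)
        + ((1 + η⁻¹) * (c * frob (A - B) ^ 2) + η * (c * frob B ^ 2)) := by
      gcongr
      · exact hA.trans (mul_le_mul_of_nonneg_left hsplit hη.le)
      · exact hAB.trans (add_le_add (mul_le_mul_of_nonneg_left (hQ _).2 (by positivity))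
          (mul_le_mul_of_nonneg_left (hQ _).2 hη.le))
    _ = (2 * η + c + c / η) * frob (A - B) ^ 2 + (2 + c) * η * frob B ^ 2 := by
      rw [div_eq_mul_inv]; ring

theorem tendsto_of_forall_eventually_abs_sub_le {α : Type*} {l : Filter α} {u E : α → ℝ}
    {a K : ℝ} (hE : Tendsto E l (𝓝 0))
    (hu : ∀ η > 0, ∃ C, ∀ᶠ x in l, |u x - a| ≤ C * E x + η * K) : Tendsto u l (𝓝 a) := by
  rw [Metric.tendsto_nhds]
  intro ε hε
  let η := ε / (2 * (|K| + 1))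
  have hη : 0 < η := by positivity
  have hηK : η * K ≤ ε / 2 :=
    calc η * K ≤ η * (|K| + 1) := mul_le_mul_of_nonneg_left (by linarith [le_abs_self K]) hη.le
      _ = ε / 2 := by simp only [η]; field_simp
  obtain ⟨C, hC⟩ := hu η hη
  have hCE : Tendsto (fun x => C * E x) l (𝓝 0) := by simpa using hE.const_mul C
  filter_upwards [hC, Metric.tendsto_nhds.1 hCE (ε / 2) (half_pos hε)] with x hx hCx
  rw [Real.dist_eq, sub_zero] at hCx
  rw [Real.dist_eq]
  linarith [le_abs_self (C * E x)]

-- Mathlib puts no σ-algebra on `Matrix`; the product one is Borel for the entrywise topology.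
instance Matrix.instMeasurableSpace {m n α : Type*} [MeasurableSpace α] :
    MeasurableSpace (Matrix m n α) :=
  inferInstanceAs (MeasurableSpace (m → n → α))

instance Matrix.instBorelSpace {m n : Type*} [Countable m] [Countable n] :
    BorelSpace (Matrix m n ℝ) :=
  inferInstanceAs (BorelSpace (m → n → ℝ))

instance Matrix.instSecondCountableTopology {m n : Type*} [Countable m] [Countable n] :
    SecondCountableTopology (Matrix m n ℝ) :=
  inferInstanceAs (SecondCountableTopology (m → n → ℝ))

instance Matrix.instMetrizableSpace {m n : Type*} [Countable m] [Countable n] :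
    TopologicalSpace.MetrizableSpace (Matrix m n ℝ) :=
  inferInstanceAs (TopologicalSpace.MetrizableSpace (m → n → ℝ))

section MeasureTheory

variable {α : Type*} [MeasurableSpace α] {μ : Measure α} {n : ℕ}

theorem Measurable.comp_caratheodory {X : Type*} [TopologicalSpace X] [MeasurableSpace X]
    [BorelSpace X] [SecondCountableTopology X] [TopologicalSpace.MetrizableSpace X]
    {F : α → X → ℝ} (hmeas : ∀ M, Measurable fun x => F x M) (hcont : ∀ x, Continuous (F x))
    {D : α → X} (hD : Measurable D) : Measurable fun x => F x (D x) :=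
  (measurable_uncurry_of_continuous_of_measurable (u := fun M x => F x M) hcont hmeas).comp
    (hD.prodMk measurable_id)

theorem integrable_sq_frob_of_ae_le [IsFiniteMeasure μ] {D : α → Matrix (Fin n) (Fin n) ℝ}
    (hD : Measurable D) {R : ℝ} (hR : ∀ᵐ x ∂μ, frob (D x) ≤ R) :
    Integrable (fun x => frob (D x) ^ 2) μ := by
  refine .of_bound ((continuous_frob.measurable.comp hD).pow_const 2).aestronglyMeasurable
    (R ^ 2) ?_
  filter_upwards [hR] with x hx
  rw [Real.norm_eq_abs, abs_sq]
  exact pow_le_pow_left₀ (Real.sqrt_nonneg _) hx 2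

theorem integrable_sq_frob_sub {A B : α → Matrix (Fin n) (Fin n) ℝ} (hA : Measurable A)
    (hB : Measurable B) (hA2 : Integrable (fun x => frob (A x) ^ 2) μ)
    (hB2 : Integrable (fun x => frob (B x) ^ 2) μ) :
    Integrable (fun x => frob (A x - B x) ^ 2) μ := by
  refine ((hA2.const_mul 2).add (hB2.const_mul 2)).mono'
    ((continuous_frob.measurable.comp (hA.sub hB)).pow_const 2).aestronglyMeasurable ?_
  refine Eventually.of_forall fun x => ?_
  rw [Real.norm_eq_abs, abs_sq]
  exact sq_frob_sub_le _ _

theorem integrable_quadraticForm_comp {Q : α → QuadraticForm ℝ (Matrix (Fin n) (Fin n) ℝ)}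
    {c : ℝ} (hQmeas : ∀ M, Measurable fun x => Q x M)
    (hQ : ∀ x M, 0 ≤ Q x M ∧ Q x M ≤ c * frob M ^ 2) {D : α → Matrix (Fin n) (Fin n) ℝ}
    (hD : Measurable D) (hD2 : Integrable (fun x => frob (D x) ^ 2) μ) :
    Integrable (fun x => Q x (D x)) μ := by
  refine (hD2.const_mul c).mono' (hD.comp_caratheodory hQmeas
    fun x => (Q x).continuous_of_finiteDimensional).aestronglyMeasurable ?_
  refine Eventually.of_forall fun x => ?_
  rw [Real.norm_eq_abs, abs_of_nonneg (hQ x _).1]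
  exact (hQ x _).2

theorem abs_integral_sub_integral_le {f g F G : α → ℝ} {C K : ℝ}
    (hf : AEStronglyMeasurable f μ) (hg : Integrable g μ) (hF : Integrable F μ)
    (hG : Integrable G μ) (hfg : ∀ᵐ x ∂μ, |f x - g x| ≤ C * F x + K * G x) :
    |∫ x, f x ∂μ - ∫ x, g x ∂μ| ≤ C * ∫ x, F x ∂μ + K * ∫ x, G x ∂μ := by
  have hbound : Integrable (fun x => C * F x + K * G x) μ := (hF.const_mul C).add (hG.const_mul K)
  have hdiff : Integrable (fun x => f x - g x) μ :=
    hbound.mono' (hf.sub hg.aestronglyMeasurable) (by simpa only [Real.norm_eq_abs] using hfg)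
  have hf' : Integrable f μ :=
    (hdiff.add hg).congr (Eventually.of_forall fun x => sub_add_cancel (f x) (g x))
  rw [← integral_sub hf' hg, ← integral_const_mul, ← integral_const_mul,
    ← integral_add (hF.const_mul C) (hG.const_mul K)]
  exact abs_integral_le_integral_abs.trans (integral_mono_ae hdiff.abs hbound hfg)

end MeasureTheory

theorem stmt_2_general {n : ℕ} (Ω : Set (EuclideanSpace ℝ (Fin n)))
    (hΩb : Bornology.IsBounded Ω)
    (W : EuclideanSpace ℝ (Fin n) → Matrix (Fin n) (Fin n) ℝ → ℝ)
    (Qf : EuclideanSpace ℝ (Fin n) → QuadraticForm ℝ (Matrix (Fin n) (Fin n) ℝ))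
    (c : ℝ)
    -- Carathéodory and nonnegativity assumptions
    (hWmeas : ∀ M, Measurable fun x => W x M)
    (hWcont : ∀ x, Continuous fun M => W x M)
    (hQmeas : ∀ M, Measurable fun x => Qf x M)
    (hQbound : ∀ x M, 0 ≤ Qf x M ∧ Qf x M ≤ c * frob M ^ 2)
    -- uniform quadratic expansion of W at the identity with quadratic term Q
    (hexp : ∀ η > (0 : ℝ), ∃ δ > (0 : ℝ), ∀ᵐ x ∂(volume.restrict Ω),
      ∀ G : Matrix (Fin n) (Fin n) ℝ, frob G ≤ δ →
        |W x (1 + G) - Qf x G| ≤ η * frob G ^ 2)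
    -- the (gradients of the) displacements
    (Dg : ℝ → EuclideanSpace ℝ (Fin n) → Matrix (Fin n) (Fin n) ℝ)
    (Dg₀ : EuclideanSpace ℝ (Fin n) → Matrix (Fin n) (Fin n) ℝ)
    (hDgmeas : ∀ h i j, Measurable fun x => Dg h x i j)
    (hDg₀meas : ∀ i j, Measurable fun x => Dg₀ x i j)
    (hDg₀L2 : Integrable (fun x => frob (Dg₀ x) ^ 2) (volume.restrict Ω))
    -- uniform bound ‖∇g_h‖_∞ ≤ h^{-1/2}
    (hLinfty : ∀ h > (0 : ℝ), ∀ᵐ x ∂(volume.restrict Ω), frob (Dg h x) ≤ h ^ (-(1/2 : ℝ)))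
    -- strong L² convergence of the gradients
    (hL2conv : Tendsto (fun h => ∫ x in Ω, frob (Dg h x - Dg₀ x) ^ 2)
      (nhdsWithin (0 : ℝ) (Set.Ioi 0)) (nhds 0)) :
    Tendsto (fun h : ℝ => (1 / h ^ 2) * ∫ x in Ω, W x (1 + h • Dg h x))
      (nhdsWithin (0 : ℝ) (Set.Ioi 0)) (nhds (∫ x in Ω, Qf x (Dg₀ x))) := by
  have : IsFiniteMeasure (volume.restrict Ω) := isFiniteMeasure_restrict.2 hΩb.measure_lt_top.ne
  have hDg : ∀ h, Measurable (Dg h) := fun h =>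
    measurable_pi_lambda _ fun i => measurable_pi_lambda _ (hDgmeas h i)
  have hDg₀ : Measurable Dg₀ := measurable_pi_lambda _ fun i => measurable_pi_lambda _ (hDg₀meas i)
  refine tendsto_of_forall_eventually_abs_sub_le (K := (2 + c) * ∫ x in Ω, frob (Dg₀ x) ^ 2)
    hL2conv fun η hη => ⟨2 * η + c + c / η, ?_⟩
  obtain ⟨δ, hδ, hexpδ⟩ := hexp η hη
  filter_upwards [Ioc_mem_nhdsGT (pow_pos hδ 2)] with h ⟨hh, hhδ⟩
  have hsqrt : √h ≤ δ := (Real.sqrt_le_sqrt hhδ).trans_eq (Real.sqrt_sq hδ.le)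
  have hpt : ∀ᵐ x ∂(volume.restrict Ω), |W x (1 + h • Dg h x) / h ^ 2 - Qf x (Dg₀ x)|
      ≤ (2 * η + c + c / η) * frob (Dg h x - Dg₀ x) ^ 2 + (2 + c) * η * frob (Dg₀ x) ^ 2 := by
    filter_upwards [hexpδ, hLinfty h hh] with x hx hxh
    exact abs_div_sq_sub_le (hQbound x) hη hh.ne'
      (hx _ ((frob_smul_le_sqrt hh hxh).trans hsqrt))
  have hW : Measurable fun x => W x (1 + h • Dg h x) / h ^ 2 :=
    (((hDg h).const_smul h).const_add 1 |>.comp_caratheodory hWmeas hWcont).div_const _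
  have hest := abs_integral_sub_integral_le hW.aestronglyMeasurable
    (integrable_quadraticForm_comp hQmeas hQbound hDg₀ hDg₀L2)
    (integrable_sq_frob_sub (hDg h) hDg₀ (integrable_sq_frob_of_ae_le (hDg h) (hLinfty h hh))
      hDg₀L2) hDg₀L2 hpt
  rw [integral_div, div_eq_inv_mul, ← one_div] at hest
  exact hest.trans_eq (by ring)

/-- If `W` admits a uniform quadratic expansion at the identity with
quadratic term `Q`, `‖∇g_h‖_∞ ≤ h^{-1/2}` and `∇g_h → ∇g` strongly in `L²`, then
`(1/h²)∫_Ω W(x, Id + h∇g_h) dx → ∫_Ω Q(x, ∇g) dx` as `h ↓ 0`. The gradients are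
represented directly as matrix fields `Dg h` and `Dg₀`. -/
theorem stmt_2 {n : ℕ} (Ω : Set (EuclideanSpace ℝ (Fin n)))
    (hΩo : IsOpen Ω) (hΩb : Bornology.IsBounded Ω)
    (W : EuclideanSpace ℝ (Fin n) → Matrix (Fin n) (Fin n) ℝ → ℝ)
    (Qf : EuclideanSpace ℝ (Fin n) → QuadraticForm ℝ (Matrix (Fin n) (Fin n) ℝ))
    (c : ℝ) (hc : 0 < c)
    -- Carathéodory and nonnegativity assumptions
    (hWnn : ∀ x M, 0 ≤ W x M)
    (hWmeas : ∀ M, Measurable fun x => W x M)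
    (hWcont : ∀ x, Continuous fun M => W x M)
    (hQmeas : ∀ M, Measurable fun x => Qf x M)
    (hQbound : ∀ x M, 0 ≤ Qf x M ∧ Qf x M ≤ c * frob M ^ 2)
    -- uniform quadratic expansion of W at the identity with quadratic term Q
    (hexp : ∀ η > (0 : ℝ), ∃ δ > (0 : ℝ), ∀ᵐ x ∂(volume.restrict Ω),
      ∀ G : Matrix (Fin n) (Fin n) ℝ, frob G ≤ δ →
        |W x (1 + G) - Qf x G| ≤ η * frob G ^ 2)
    -- the (gradients of the) displacements
    (Dg : ℝ → EuclideanSpace ℝ (Fin n) → Matrix (Fin n) (Fin n) ℝ)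
    (Dg₀ : EuclideanSpace ℝ (Fin n) → Matrix (Fin n) (Fin n) ℝ)
    (hDgmeas : ∀ h i j, Measurable fun x => Dg h x i j)
    (hDg₀meas : ∀ i j, Measurable fun x => Dg₀ x i j)
    (hDg₀L2 : Integrable (fun x => frob (Dg₀ x) ^ 2) (volume.restrict Ω))
    -- uniform bound ‖∇g_h‖_∞ ≤ h^{-1/2}
    (hLinfty : ∀ h > (0 : ℝ), ∀ᵐ x ∂(volume.restrict Ω), frob (Dg h x) ≤ h ^ (-(1/2 : ℝ)))
    -- strong L² convergence of the gradients
    (hL2conv : Tendsto (fun h => ∫ x in Ω, frob (Dg h x - Dg₀ x) ^ 2)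
      (nhdsWithin (0 : ℝ) (Set.Ioi 0)) (nhds 0)) :
    Tendsto (fun h : ℝ => (1 / h ^ 2) * ∫ x in Ω, W x (1 + h • Dg h x))
      (nhdsWithin (0 : ℝ) (Set.Ioi 0)) (nhds (∫ x in Ω, Qf x (Dg₀ x))) :=
  stmt_2_general Ω hΩb W Qf c hWmeas hWcont hQmeas hQbound hexp Dg Dg₀ hDgmeas hDg₀meas hDg₀L2
    hLinfty hL2conv
end
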